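/- Let d ≥ 2 and let Λ₁ ⊆ Λ₂ be two σ_d-invariant q-laminations with associated equivalence relations ∼₁, ∼₂, such that every ∼₁-class is contained in a ∼₂-class (Λ₂ tunes Λ₁). If ℓ is a leaf of Λ₂ that is not a leaf of Λ₁ and is not a limit of leaves of Λ₁, then ℓ is contained in (the closure of) an infinite gap of Λ₁, where a gap is the closure of a component of the open disk minus the union of all leaves of Λ₁, and a gap is infinite if its intersection with the circle is infinite. -/

import Mathlib

noncomputable section

/-- The circle `ℝ/ℤ`. -/
abbrev S1 := AddCircle (1 : ℝ)

/-- The `d`-tupling map `σ_d(t) = d·t` on the circle. -/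
def sig (d : ℕ) (x : S1) : S1 := d • x

/-- `StrictArc a b c` : `b` lies strictly inside the positively oriented open arc from `a` to `c`. -/
def StrictArc (a b c : S1) : Prop :=
  ∃ x y z : ℝ, (x : S1) = a ∧ (y : S1) = b ∧ (z : S1) = c ∧ x < y ∧ y < z ∧ z < x + 1

/-- Two chords (given by ordered pairs of endpoints) are linked (cross): their endpoints
alternate on the circle. -/
def Linked (p q : S1 × S1) : Prop :=
  (StrictArc p.1 q.1 p.2 ∧ StrictArc p.2 q.2 p.1) ∨ (StrictArc p.1 q.2 p.2 ∧ StrictArc p.2 q.1 p.1)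

/-- Two chords are disjoint: they share no endpoint and are not linked. -/
def ChordDisj (p q : S1 × S1) : Prop :=
  p.1 ≠ q.1 ∧ p.1 ≠ q.2 ∧ p.2 ≠ q.1 ∧ p.2 ≠ q.2 ∧ ¬ Linked p q

/-- The σ_d-image of a chord, as the (unordered) set of images of the endpoints. -/
def chordIm (d : ℕ) (p : S1 × S1) : Set S1 := {sig d p.1, sig d p.2}
def circleMap1 : ℝ → ℂ := fun x => Complex.exp (2 * Real.pi * Complex.I * (x : ℂ))

theorem circleMap1_periodic : Function.Periodic circleMap1 1 := by
  intro x
  unfold circleMap1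
  push_cast
  rw [mul_add, Complex.exp_add, mul_one, Complex.exp_two_pi_mul_I, mul_one]

/-- The standard embedding of the circle `ℝ/ℤ` into the plane (unit circle in `ℂ`). -/
def toC : S1 → ℂ := circleMap1_periodic.lift

/-- The chord with endpoints `p.1, p.2`, realized as a straight segment in the closed disk. -/
def chordSeg (p : S1 × S1) : Set ℂ := segment ℝ (toC p.1) (toC p.2)
/-- A σ_d-invariant laminational equivalence relation on the circle. -/
structure LamEq (d : ℕ) where
  /-- the relation -/
  r : S1 → S1 → Prop
  refl : ∀ x, r x x
  symm : ∀ {x y}, r x y → r y x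
  trans : ∀ {x y z}, r x y → r y z → r x z
  /-- (E1) the graph of the relation is closed -/
  closed : IsClosed {p : S1 × S1 | r p.1 p.2}
  /-- (E3) all classes are finite -/
  finite : ∀ x, {y | r x y}.Finite
  /-- (E2) convex hulls of distinct classes are unlinked (hence disjoint) -/
  unlinked : ∀ x y z w, r x y → r z w → ¬ r x z → ¬ Linked (x, y) (z, w)
  /-- (D1) the image of a class is a class -/
  forward : ∀ x, sig d '' {y | r x y} = {z | r (sig d x) z}
  /-- (D3) on classes with more than two points, σ_d is a positively oriented covering map
  onto the image class: every hole of a class maps to a degenerate arc or to a hole of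
  the image class. -/
  posOriented : ∀ x, 2 < Set.ncard {y | r x y} →
    ∀ s t, r x s → r x t → s ≠ t → (∀ z, r x z → ¬ StrictArc s z t) →
      sig d s = sig d t ∨ ∀ w, r (sig d x) w → ¬ StrictArc (sig d s) w (sig d t)

/-- `{x, y}` is an edge of the convex hull of the class of `x`: both endpoints lie in one
class and one of the two open arcs determined by them contains no point of the class. -/
def LamEq.IsEdge {d : ℕ} (E : LamEq d) (x y : S1) : Prop :=
  E.r x y ∧ x ≠ y ∧
    ((∀ z, E.r x z → ¬ StrictArc x z y) ∨ (∀ z, E.r x z → ¬ StrictArc y z x))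

/-- The union of all (non-degenerate) leaves of the q-lamination of `E`, realized as
straight segments in the closed unit disk. -/
def leafUnion {d : ℕ} (E : LamEq d) : Set ℂ :=
  ⋃ p ∈ {p : S1 × S1 | E.IsEdge p.1 p.2}, chordSeg p

/-! Lift `ℓ` to reals `t₁ < t₂ < t₁ + 1` so that the `∼₂`-class of its first endpoint has no point
in the arc `(t₁, t₂)`. Every `∼₂`-class, hence every `Λ₁`-leaf, meeting that arc lies inside it,
and the lifts of these leaves form a non-crossing family of intervals in `(t₁, t₂)`. Between two
consecutive points of `[t₁, t₂]` covered by no such interval, the intervals containing the midpoint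
exhaust the gap, so the two points are `∼₁`-equivalent because `∼₁` is closed. If there were only
finitely many uncovered points, chaining would give `t₁ ∼₁ t₂` and `ℓ` would be a leaf of `Λ₁`.
So there are infinitely many, and the open chord `ℓ` together with the segments from its midpoint
to the uncovered points is a connected set missing every leaf of `Λ₁` (each leaf stays on one side of
a suitable chord). It lies in one gap, whose closure contains `ℓ` and infinitely many points of
the circle. -/

open Set

namespace Lamination

def Covered (L : Set (ℝ × ℝ)) (s : ℝ) : Prop := ∃ p ∈ L, p.1 < s ∧ s < p.2

/-- Any two intervals of `L` are nested or have disjoint interiors. -/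
def NonCrossing (L : Set (ℝ × ℝ)) : Prop :=
  ∀ p ∈ L, ∀ q ∈ L, p.1 < q.1 → q.1 < p.2 → q.2 ≤ p.2

namespace NonCrossing

variable {L : Set (ℝ × ℝ)}

theorem nested (hL : NonCrossing L) {p q : ℝ × ℝ} (hp : p ∈ L) (hq : q ∈ L) {x : ℝ}
    (hpx : p.1 < x ∧ x < p.2) (hqx : q.1 < x ∧ x < q.2) :
    (q.1 ≤ p.1 ∧ p.2 ≤ q.2) ∨ (p.1 ≤ q.1 ∧ q.2 ≤ p.2) := by
  rcases lt_trichotomy p.1 q.1 with h | h | h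
  · exact Or.inr ⟨h.le, hL p hp q hq h (by linarith)⟩
  · rcases le_total p.2 q.2 with h' | h'
    · exact Or.inl ⟨h.ge, h'⟩
    · exact Or.inr ⟨h.le, h'⟩
  · exact Or.inl ⟨h.le, hL q hq p hp h (by linarith)⟩

theorem reflect (hL : NonCrossing L) :
    NonCrossing ((fun p : ℝ × ℝ => (-p.2, -p.1)) '' L) := by
  rintro _ ⟨p, hp, rfl⟩ _ ⟨q, hq, rfl⟩ h₁ h₂
  by_contra! h₃
  have := hL q hq p hp (by simpa using h₃) (by simpa using h₂)
  simp only at h₁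
  linarith

end NonCrossing

theorem covered_reflect_iff {L : Set (ℝ × ℝ)} {s : ℝ} :
    Covered ((fun p : ℝ × ℝ => (-p.2, -p.1)) '' L) s ↔ Covered L (-s) := by
  constructor
  · rintro ⟨_, ⟨p, hp, rfl⟩, h₁, h₂⟩
    exact ⟨p, hp, by simp only at h₁ h₂; constructor <;> linarith⟩
  · rintro ⟨p, hp, h₁, h₂⟩
    exact ⟨_, ⟨p, hp, rfl⟩, by simp only; constructor <;> linarith⟩

theorem exists_covering_fst_lt_of_not_covered {L : Set (ℝ × ℝ)} (hL : NonCrossing L)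
    {u x : ℝ} (hux : u < x) (hu : ¬ Covered L u) (hcov : ∀ s ∈ Ioc u x, Covered L s)
    {ε : ℝ} (hε : 0 < ε) : ∃ p ∈ L, (p.1 < x ∧ x < p.2) ∧ p.1 < u + ε := by
  set C := {p ∈ L | p.1 < x ∧ x < p.2}
  obtain ⟨p₀, hp₀⟩ : C.Nonempty := hcov x ⟨hux, le_rfl⟩
  have hCu : ∀ p ∈ C, u ≤ p.1 := fun p hp =>
    not_lt.1 fun h => hu ⟨p, hp.1, h, hux.trans hp.2.2⟩
  have hne : (Prod.fst '' C).Nonempty := ⟨p₀.1, p₀, hp₀, rfl⟩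
  have hbdd : BddBelow (Prod.fst '' C) := ⟨u, by rintro _ ⟨p, hp, rfl⟩; exact hCu p hp⟩
  -- The infimum of the left endpoints of the intervals covering `x` is itself uncovered.
  set a := sInf (Prod.fst '' C)
  have ha_le : ∀ p ∈ C, a ≤ p.1 := fun p hp => csInf_le hbdd ⟨p, hp, rfl⟩
  have ha_not : ¬ Covered L a := by
    rintro ⟨q, hq, hqa, haq⟩
    obtain ⟨_, ⟨p, hp, rfl⟩, hpq⟩ := (csInf_lt_iff hbdd hne).1 haq
    have hp₂ : p.2 ≤ q.2 := hL q hq p hp.1 (hqa.trans_le (ha_le p hp)) hpq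
    have := ha_le q ⟨hq, by linarith [ha_le p hp, hp.2.1], by linarith [hp.2.2]⟩
    linarith
  have hua : u ≤ a := le_csInf hne (by rintro _ ⟨p, hp, rfl⟩; exact hCu p hp)
  have hax : a < x := (ha_le p₀ hp₀).trans_lt hp₀.2.1
  have hau : a = u :=
    (eq_or_lt_of_le hua).elim Eq.symm fun h => absurd (hcov a ⟨h, hax.le⟩) ha_not
  obtain ⟨_, ⟨p, hp, rfl⟩, hpε⟩ := (csInf_lt_iff hbdd hne).1 (show a < u + ε by linarith)
  exact ⟨p, hp.1, hp.2, hpε⟩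

theorem mem_closure_of_not_covered {L : Set (ℝ × ℝ)} (hL : NonCrossing L) {u v : ℝ}
    (huv : u < v) (hu : ¬ Covered L u) (hv : ¬ Covered L v)
    (hcov : ∀ s ∈ Ioo u v, Covered L s) : (u, v) ∈ closure L := by
  set x := (u + v) / 2
  have hux : u < x := by simp only [x]; linarith
  have hxv : x < v := by simp only [x]; linarith
  rw [Metric.mem_closure_iff]
  intro ε hε
  obtain ⟨p, hp, hpx, hpε⟩ := exists_covering_fst_lt_of_not_covered hL hux hu
    (fun s hs => hcov s ⟨hs.1, hs.2.trans_lt hxv⟩) hε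
  -- Right endpoints near `v`: the same statement for the mirror image of `L`.
  obtain ⟨_, ⟨q, hq, rfl⟩, hqx, hqε⟩ := exists_covering_fst_lt_of_not_covered hL.reflect
    (neg_lt_neg hxv) (covered_reflect_iff.not.2 (by simpa using hv))
    (fun s hs => covered_reflect_iff.2 (hcov _ ⟨by linarith [hs.2], by linarith [hs.1]⟩)) hε
  simp only at hqx hqε
  have hqx' : q.1 < x ∧ x < q.2 := ⟨by linarith, by linarith⟩
  have bounds : ∀ r ∈ L, r.1 < x ∧ x < r.2 → u ≤ r.1 ∧ r.2 ≤ v := fun r hr hrx =>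
    ⟨not_lt.1 fun h => hu ⟨r, hr, h, hux.trans hrx.2⟩,
      not_lt.1 fun h => hv ⟨r, hr, hrx.1.trans hxv, h⟩⟩
  have close : ∀ r ∈ L, r.1 < x ∧ x < r.2 → r.1 < u + ε → v - ε < r.2 → dist (u, v) r < ε :=
    fun r hr hrx h₁ h₂ => by
      obtain ⟨b₁, b₂⟩ := bounds r hr hrx
      rw [Prod.dist_eq, max_lt_iff, Real.dist_eq, Real.dist_eq, abs_lt, abs_lt]
      exact ⟨⟨by linarith, by linarith⟩, by linarith, by linarith⟩
  rcases hL.nested hp hq hpx hqx' with h | h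
  · exact ⟨q, hq, close q hq hqx' (by linarith) (by linarith)⟩
  · exact ⟨p, hp, close p hp hpx hpε (by linarith)⟩

theorem reflTransGen_of_consecutive {U : Set ℝ} (hU : U.Finite) {R : ℝ → ℝ → Prop}
    (hstep : ∀ u ∈ U, ∀ v ∈ U, u < v → (∀ s ∈ Ioo u v, s ∉ U) → R u v)
    {a b : ℝ} (ha : a ∈ U) (hb : b ∈ U) (hab : a ≤ b) : Relation.ReflTransGen R a b := by
  by_contra hab'
  obtain ⟨v, ⟨hvU, hav, hv⟩, hvmin⟩ := Set.exists_min_image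
    {v ∈ U | a ≤ v ∧ ¬ Relation.ReflTransGen R a v} id (hU.subset (sep_subset _ _))
    ⟨b, hb, hab, hab'⟩
  have hav' : a < v := hav.lt_of_ne fun h => hv (h ▸ .refl)
  obtain ⟨w, ⟨hwU, haw, hwv⟩, hwmax⟩ := Set.exists_max_image
    {w ∈ U | a ≤ w ∧ w < v} id (hU.subset (sep_subset _ _)) ⟨a, ha, le_rfl, hav'⟩
  have hw : Relation.ReflTransGen R a w := by
    by_contra h
    exact hwv.not_ge (hvmin w ⟨hwU, haw, h⟩)
  refine hv (hw.tail (hstep w hwU v hvU hwv fun s hs hsU => ?_))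
  exact hs.1.not_ge (hwmax s ⟨hsU, haw.trans hs.1.le, hs.2⟩)

theorem exists_coe_eq_mem_Ico (t : ℝ) (c : S1) : ∃ s ∈ Ico t (t + 1), (s : S1) = c :=
  ⟨AddCircle.equivIco 1 t c, (AddCircle.equivIco 1 t c).2, AddCircle.coe_equivIco⟩

theorem exists_lifts {p₁ p₂ : S1} (hne : p₁ ≠ p₂) :
    ∃ x y : ℝ, (x : S1) = p₁ ∧ (y : S1) = p₂ ∧ x < y ∧ y < x + 1 := by
  obtain ⟨x, -, rfl⟩ := exists_coe_eq_mem_Ico 0 p₁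
  obtain ⟨y, ⟨hxy, hyx⟩, rfl⟩ := exists_coe_eq_mem_Ico x p₂
  exact ⟨x, y, rfl, rfl, hxy.lt_of_ne (by rintro rfl; exact hne rfl), hyx⟩

theorem _root_.StrictArc.exists_coe_eq_mem_Ioo {x z : ℝ} {c : S1} (h : StrictArc x c z)
    (hxz : x < z) (hzx : z < x + 1) : ∃ s ∈ Ioo x z, (s : S1) = c := by
  obtain ⟨a, b, e, ha, rfl, he, hab, hbe, hea⟩ := h
  have shift : ∀ r : ℝ, ((r - a + x : ℝ) : S1) = r := fun r => by
    rw [AddCircle.coe_add, AddCircle.coe_sub, ha, sub_add_cancel]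
  have hez : e - a + x = z := (AddCircle.coe_eq_coe_iff_of_mem_Ico
    (a := x) (p := 1) ⟨by linarith, by linarith⟩ ⟨hxz.le, hzx⟩).1 ((shift e).trans he)
  exact ⟨b - a + x, ⟨by linarith, by linarith⟩, shift b⟩

theorem exists_coe_eq_mem_Icc_of_not_strictArc {x y : ℝ} {c : S1} (h : ¬ StrictArc x c y)
    (hy : y < x + 1) : ∃ s ∈ Icc y (x + 1), (s : S1) = c := by
  obtain ⟨s, ⟨hxs, hsx⟩, rfl⟩ := exists_coe_eq_mem_Ico x c
  rcases hxs.eq_or_lt with rfl | hxs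
  · exact ⟨x + 1, ⟨hy.le, le_rfl⟩, AddCircle.coe_add_period 1 x⟩
  · by_cases hsy : s < y
    · exact absurd ⟨x, s, y, rfl, rfl, rfl, hxs, hsy, hy⟩ h
    · exact ⟨s, ⟨not_lt.1 hsy, hsx.le⟩, rfl⟩

end Lamination

namespace LamEq

open Lamination

variable {d : ℕ}

theorem IsEdge.symm {E : LamEq d} {x y : S1} (h : E.IsEdge x y) : E.IsEdge y x := by
  obtain ⟨hr, hne, hxy | hyx⟩ := h
  · exact ⟨E.symm hr, hne.symm, Or.inr fun z hz => hxy z (E.trans hr hz)⟩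
  · exact ⟨E.symm hr, hne.symm, Or.inl fun z hz => hyx z (E.trans hr hz)⟩

theorem IsEdge.not_linked {E : LamEq d} {x y z w : S1} (hxy : E.IsEdge x y)
    (hzw : E.IsEdge z w) : ¬ Linked (x, y) (z, w) := by
  intro hL
  by_cases hxz : E.r x z
  · have hxw : E.r x w := E.trans hxz hzw.1
    rcases hL with ⟨h₁, h₂⟩ | ⟨h₁, h₂⟩ <;> rcases hxy.2.2 with hs | hs
    exacts [hs z hxz h₁, hs w hxw h₂, hs w hxw h₁, hs z hxz h₂]
  · exact E.unlinked x y z w hxy.1 hzw.1 hxz hL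

/-- A class meeting the arc `(x, y)` without lying inside it would cross the chord `xy`. -/
theorem strictArc_of_r (E : LamEq d) {x y c e : S1} (hxy : E.r x y) (hne : x ≠ y)
    (hside : ∀ z, E.r x z → ¬ StrictArc x z y) (hc : StrictArc x c y) (hce : E.r c e) :
    StrictArc x e y := by
  obtain ⟨s, t, rfl, rfl, hst, hts⟩ := exists_lifts hne
  have hxc : ¬ E.r s c := fun h => hside c h hc
  by_contra he
  obtain ⟨w, ⟨hw₁, hw₂⟩, rfl⟩ := exists_coe_eq_mem_Icc_of_not_strictArc he hts
  rcases hw₁.eq_or_lt with rfl | hw₁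
  · exact hxc (E.trans hxy (E.symm hce))
  rcases hw₂.eq_or_lt with rfl | hw₂
  · exact hxc (E.symm (by rwa [AddCircle.coe_add_period] at hce))
  refine E.unlinked s t c w hxy hce hxc (Or.inl ⟨hc, t, w, s + 1, rfl, rfl, ?_, hw₁, hw₂, ?_⟩)
  · exact AddCircle.coe_add_period 1 s
  · linarith

theorem equivalence (E : LamEq d) : Equivalence E.r := ⟨E.refl, E.symm, E.trans⟩

def leafIntervals (E : LamEq d) (t₁ t₂ : ℝ) : Set (ℝ × ℝ) :=
  {p | t₁ < p.1 ∧ p.1 < p.2 ∧ p.2 < t₂ ∧ E.IsEdge p.1 p.2}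

variable {E : LamEq d} {t₁ t₂ : ℝ}

theorem nonCrossing_leafIntervals (ht : t₂ ≤ t₁ + 1) :
    NonCrossing (E.leafIntervals t₁ t₂) := by
  rintro p ⟨hp₁, hp, hp₂, hpE⟩ q ⟨hq₁, hq, hq₂, hqE⟩ h₁ h₂
  by_contra! h₃
  refine hpE.not_linked hqE (Or.inl ⟨⟨p.1, q.1, p.2, rfl, rfl, rfl, h₁, h₂, by linarith⟩,
    p.2, q.2, p.1 + 1, rfl, rfl, AddCircle.coe_add_period 1 p.1, h₃, by linarith, by linarith⟩)

theorem r_of_mem_closure_leafIntervals {u v : ℝ}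
    (h : (u, v) ∈ closure (E.leafIntervals t₁ t₂)) : E.r u v := by
  have hcont : Continuous fun p : ℝ × ℝ => ((p.1 : S1), (p.2 : S1)) := by fun_prop
  refine closure_minimal (fun p hp => ?_) (E.closed.preimage hcont) h
  exact hp.2.2.2.1

theorem infinite_not_covered (ht : t₁ < t₂) (ht' : t₂ ≤ t₁ + 1) (hr : ¬ E.r t₁ t₂) :
    {s ∈ Icc t₁ t₂ | ¬ Covered (E.leafIntervals t₁ t₂) s}.Infinite := by
  set U := {s ∈ Icc t₁ t₂ | ¬ Covered (E.leafIntervals t₁ t₂) s}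
  have ht₁ : t₁ ∈ U := ⟨left_mem_Icc.2 ht.le, fun ⟨_, hp, h, _⟩ => lt_asymm hp.1 h⟩
  have ht₂ : t₂ ∈ U := ⟨right_mem_Icc.2 ht.le, fun ⟨_, hp, _, h⟩ => lt_asymm hp.2.2.1 h⟩
  have hconsec : ∀ u ∈ U, ∀ v ∈ U, u < v → (∀ s ∈ Ioo u v, s ∉ U) → E.r u v :=
    fun u hu v hv huv hgap => E.r_of_mem_closure_leafIntervals <|
      mem_closure_of_not_covered (E.nonCrossing_leafIntervals ht') huv hu.2 hv.2 fun s hs =>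
        not_not.1 fun h => hgap s hs ⟨⟨hu.1.1.trans hs.1.le, hs.2.le.trans hv.1.2⟩, h⟩
  exact fun hU => hr <| Relation.reflTransGen_le_of_equivalence_of_le
    (E.equivalence.comap ((↑) : ℝ → S1)) le_rfl _ _
    (reflTransGen_of_consecutive hU hconsec ht₁ ht₂ ht.le)

end LamEq

namespace Lamination

theorem toC_eq_toCircle (x : S1) : toC x = AddCircle.toCircle x := by
  induction x using QuotientAddGroup.induction_on with
  | H t =>
    simp only [toC, circleMap1, Function.Periodic.lift_coe, AddCircle.toCircle_apply_mk,
      Circle.coe_exp]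
    push_cast
    ring_nf

theorem toC_injective : Function.Injective toC := fun a b h =>
  AddCircle.injective_toCircle one_ne_zero <| Subtype.ext <| by
    simpa only [toC_eq_toCircle] using h

theorem norm_toC (x : S1) : ‖toC x‖ = 1 := by
  rw [toC_eq_toCircle, Circle.norm_coe]

theorem toC_coe (t : ℝ) : toC t = circleMap1 t := circleMap1_periodic.lift_coe t

theorem norm_circleMap1 (t : ℝ) : ‖circleMap1 t‖ = 1 := by
  rw [← toC_coe, norm_toC]

open ComplexConjugate

/-- Twice the signed area of the triangle `a b p`: positive iff `p` lies to the left of `a → b`. -/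
def chordSide (a b : ℂ) : ℂ →ᵃ[ℝ] ℝ where
  toFun p := ((p - a) * conj (b - a)).im
  linear := Complex.imLm.comp (LinearMap.mulRight ℝ (conj (b - a)))
  map_vadd' p v := by simp [add_sub_assoc, add_mul]

theorem chordSide_apply (a b p : ℂ) : chordSide a b p = ((p - a) * conj (b - a)).im := rfl

theorem chordSide_left (a b : ℂ) : chordSide a b a = 0 := by simp [chordSide_apply]

theorem chordSide_right (a b : ℂ) : chordSide a b b = 0 := by
  simp only [chordSide_apply, Complex.mul_conj, Complex.ofReal_im]

theorem circleMap1_mul_conj (s t : ℝ) :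
    circleMap1 s * conj (circleMap1 t) = circleMap1 (s - t) := by
  simp only [circleMap1, ← Complex.exp_conj, ← Complex.exp_add, map_mul, Complex.conj_ofReal,
    Complex.conj_I, map_ofNat]
  push_cast
  ring_nf

theorem circleMap1_im (t : ℝ) : (circleMap1 t).im = Real.sin (2 * Real.pi * t) := by
  rw [circleMap1, show 2 * Real.pi * Complex.I * t = ((2 * Real.pi * t : ℝ) : ℂ) * Complex.I by
    push_cast; ring, Complex.exp_ofReal_mul_I_im]

theorem chordSide_circleMap1 (x y w : ℝ) :
    chordSide (circleMap1 x) (circleMap1 y) (circleMap1 w) =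
      4 * Real.sin (Real.pi * (w - x)) * Real.sin (Real.pi * (y - x)) *
        Real.sin (Real.pi * (w - y)) := by
  have expand : (circleMap1 w - circleMap1 x) * conj (circleMap1 y - circleMap1 x) =
      circleMap1 (w - y) - circleMap1 (w - x) - circleMap1 (x - y) + circleMap1 (x - x) := by
    simp only [map_sub, ← circleMap1_mul_conj]; ring
  rw [chordSide_apply, expand]
  simp only [Complex.add_im, Complex.sub_im, circleMap1_im, sub_self, mul_zero, Real.sin_zero,
    add_zero]
  set A := Real.pi * (w - x)
  set B := Real.pi * (y - x)
  rw [show 2 * Real.pi * (w - y) = 2 * (A - B) by ring,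
    show 2 * Real.pi * (w - x) = 2 * A by ring, show 2 * Real.pi * (x - y) = -(2 * B) by ring,
    show Real.pi * (w - y) = A - B by ring,
    Real.sin_neg, Real.sin_two_mul, Real.sin_two_mul, Real.sin_two_mul, Real.sin_sub,
    Real.cos_sub]
  linear_combination (2 * Real.sin A * Real.cos A) * Real.sin_sq_add_cos_sq B
    - (2 * Real.sin B * Real.cos B) * Real.sin_sq_add_cos_sq A

theorem sin_pi_mul_pos {s : ℝ} (h₀ : 0 < s) (h₁ : s < 1) : 0 < Real.sin (Real.pi * s) :=
  Real.sin_pos_of_pos_of_lt_pi (by positivity) (by nlinarith [Real.pi_pos])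

theorem sin_pi_mul_nonneg {s : ℝ} (h₀ : 0 ≤ s) (h₁ : s ≤ 1) : 0 ≤ Real.sin (Real.pi * s) :=
  Real.sin_nonneg_of_nonneg_of_le_pi (by positivity) (by nlinarith [Real.pi_pos])

section Sign

variable {x y w : ℝ}

theorem chordSide_circleMap1_pos (hxy : x < y) (hyw : y < w) (hwx : w < x + 1) :
    0 < chordSide (circleMap1 x) (circleMap1 y) (circleMap1 w) := by
  rw [chordSide_circleMap1]
  have := sin_pi_mul_pos (s := w - x) (by linarith) (by linarith)
  have := sin_pi_mul_pos (s := y - x) (by linarith) (by linarith)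
  have := sin_pi_mul_pos (s := w - y) (by linarith) (by linarith)
  positivity

theorem chordSide_circleMap1_nonneg (hxy : x < y) (hyx : y < x + 1) (hw : w ∈ Icc y (x + 1)) :
    0 ≤ chordSide (circleMap1 x) (circleMap1 y) (circleMap1 w) := by
  rw [chordSide_circleMap1]
  have := sin_pi_mul_nonneg (s := w - x) (by linarith [hw.1]) (by linarith [hw.2])
  have := sin_pi_mul_nonneg (s := y - x) (by linarith) (by linarith)
  have := sin_pi_mul_nonneg (s := w - y) (by linarith [hw.1]) (by linarith [hw.2])
  positivity

theorem chordSide_circleMap1_neg (hxw : x < w) (hwy : w < y) (hyx : y < x + 1) :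
    chordSide (circleMap1 x) (circleMap1 y) (circleMap1 w) < 0 := by
  rw [chordSide_circleMap1, show Real.pi * (w - y) = -(Real.pi * (y - w)) by ring, Real.sin_neg]
  have h₁ := sin_pi_mul_pos (s := w - x) (by linarith) (by linarith)
  have h₂ := sin_pi_mul_pos (s := y - x) (by linarith) (by linarith)
  have h₃ := sin_pi_mul_pos (s := y - w) (by linarith) (by linarith)
  have := mul_pos (mul_pos (mul_pos four_pos h₁) h₂) h₃
  linarith

end Sign

section Fan

variable {E : Type*} [AddCommGroup E] [Module ℝ E] {a b : E} {V : Set E}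

def fan (a b : E) (V : Set E) : Set E :=
  openSegment ℝ a b ∪ ⋃ v ∈ V, AffineMap.lineMap (midpoint ℝ a b) v '' Ico (0 : ℝ) 1

theorem openSegment_subset_fan : openSegment ℝ a b ⊆ fan a b V := subset_union_left

theorem lineMap_mem_fan {v : E} (hv : v ∈ V) {t : ℝ} (ht : t ∈ Ico 0 1) :
    AffineMap.lineMap (midpoint ℝ a b) v t ∈ fan a b V :=
  Or.inr (mem_biUnion hv (mem_image_of_mem _ ht))

theorem fan_pos {h : E →ᵃ[ℝ] ℝ} (ha : 0 < h a) (hb : 0 < h b) (hV : ∀ v ∈ V, 0 ≤ h v) :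
    ∀ q ∈ fan a b V, 0 < h q := by
  have hseg : openSegment ℝ a b ⊆ h ⁻¹' Ioi 0 :=
    ((convex_Ioi 0).affine_preimage h).openSegment_subset ha hb
  have hm : 0 < h (midpoint ℝ a b) := hseg (midpoint_mem_openSegment a b)
  rintro q (hq | hq)
  · exact hseg hq
  simp only [mem_iUnion] at hq
  obtain ⟨v, hv, t, ⟨ht₀, ht₁⟩, rfl⟩ := hq
  rw [AffineMap.apply_lineMap, AffineMap.lineMap_apply_ring]
  have := hV v hv
  have : 0 < 1 - t := by linarith
  positivity

theorem mem_openSegment_of_mem_fan {h : E →ᵃ[ℝ] ℝ} (ha : h a = 0) (hb : h b = 0)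
    (hV : ∀ v ∈ V, h v < 0) {q : E} (hq : q ∈ fan a b V) (hq₀ : 0 ≤ h q) :
    q ∈ openSegment ℝ a b := by
  rcases hq with hq | hq
  · exact hq
  simp only [mem_iUnion] at hq
  obtain ⟨v, hv, t, ⟨ht₀, ht₁⟩, rfl⟩ := hq
  rw [AffineMap.apply_lineMap, AffineMap.lineMap_apply_ring, AffineMap.map_midpoint, ha, hb,
    midpoint_self] at hq₀
  obtain rfl : t = 0 := by nlinarith [hV v hv]
  rw [AffineMap.lineMap_apply_zero]
  exact midpoint_mem_openSegment a b

variable [TopologicalSpace E] [IsTopologicalAddGroup E] [ContinuousSMul ℝ E]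

theorem isPreconnected_fan : IsPreconnected (fan a b V) := by
  refine isPreconnected_of_forall (midpoint ℝ a b) fun q hq => ?_
  rcases hq with hq | hq
  · exact ⟨_, openSegment_subset_fan, midpoint_mem_openSegment a b, hq,
      (convex_openSegment a b).isPreconnected⟩
  simp only [mem_iUnion] at hq
  obtain ⟨v, hv, hq⟩ := hq
  refine ⟨AffineMap.lineMap (midpoint ℝ a b) v '' Ico (0 : ℝ) 1, ?_,
    ⟨0, ⟨le_rfl, zero_lt_one⟩, AffineMap.lineMap_apply_zero _ _⟩, hq,
    ((convex_Ico 0 1).affine_image _).isPreconnected⟩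
  rintro _ ⟨t, ht, rfl⟩
  exact lineMap_mem_fan hv ht

theorem segment_subset_closure_fan : segment ℝ a b ⊆ closure (fan a b V) :=
  segment_subset_closure_openSegment.trans (closure_mono openSegment_subset_fan)

theorem subset_closure_fan : V ⊆ closure (fan a b V) := by
  intro v hv
  refine closure_mono ?_ (segment_subset_closure_openSegment (right_mem_segment ℝ
    (midpoint ℝ a b) v))
  rw [openSegment_eq_image_lineMap]
  rintro _ ⟨t, ht, rfl⟩
  exact lineMap_mem_fan hv (Ioo_subset_Ico_self ht)

theorem fan_subset_interior {s : Set E} (hs : StrictConvex ℝ s) (ha : a ∈ s) (hb : b ∈ s)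
    (hab : a ≠ b) (hV : V ⊆ closure s) : fan a b V ⊆ interior s := by
  have hseg := hs.openSegment_subset ha hb hab
  rintro q (hq | hq)
  · exact hseg hq
  simp only [mem_iUnion] at hq
  obtain ⟨v, hv, t, ⟨ht₀, ht₁⟩, rfl⟩ := hq
  have hm := hseg (midpoint_mem_openSegment a b)
  rcases ht₀.eq_or_lt with rfl | ht₀
  · rwa [AffineMap.lineMap_apply_zero]
  refine hs.convex.openSegment_interior_closure_subset_interior hm (hV hv) ?_
  rw [openSegment_eq_image_lineMap]
  exact ⟨t, ⟨ht₀, ht₁⟩, rfl⟩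

end Fan

theorem circleMap1_injOn (t : ℝ) : InjOn circleMap1 (Ico t (t + 1)) := fun a ha b hb h =>
  (AddCircle.coe_eq_coe_iff_of_mem_Ico ha hb).1 (toC_injective (by rwa [toC_coe, toC_coe]))

theorem circleMap1_ne {x y : ℝ} (hxy : x < y) (hyx : y < x + 1) : circleMap1 x ≠ circleMap1 y :=
  fun h => hxy.ne (circleMap1_injOn x ⟨le_rfl, by linarith⟩ ⟨hxy.le, hyx⟩ h)

theorem circleMap1_mem_closedBall (t : ℝ) : circleMap1 t ∈ Metric.closedBall (0 : ℂ) 1 :=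
  mem_closedBall_zero_iff.2 (norm_circleMap1 t).le

theorem disjoint_segment_fan_of_nested {x y s s' : ℝ} {W : Set ℝ} (hxs : x < s) (hss : s < s')
    (hsy : s' < y) (hyx : y < x + 1) (hW : W ⊆ Icc x y) (hWs : ∀ u ∈ W, u ∉ Ioo s s') :
    Disjoint (segment ℝ (circleMap1 s) (circleMap1 s'))
      (fan (circleMap1 x) (circleMap1 y) (circleMap1 '' W)) := by
  set g := chordSide (circleMap1 s) (circleMap1 s')
  have hgW : ∀ v ∈ circleMap1 '' W, 0 ≤ g v := by
    rintro _ ⟨u, hu, rfl⟩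
    by_cases hsu : s' ≤ u
    · exact chordSide_circleMap1_nonneg hss (by linarith) ⟨hsu, by linarith [(hW hu).2]⟩
    · have hus : u ≤ s := not_lt.1 fun h => hWs u hu ⟨h, not_le.1 hsu⟩
      rw [← circleMap1_periodic u]
      exact chordSide_circleMap1_nonneg hss (by linarith) ⟨by linarith [(hW hu).1], by linarith⟩
  have hgx : 0 < g (circleMap1 x) := by
    rw [← circleMap1_periodic x]
    exact chordSide_circleMap1_pos hss (by linarith) (by linarith)
  have hgy : 0 < g (circleMap1 y) := chordSide_circleMap1_pos hss hsy (by linarith)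
  refine disjoint_left.2 fun q hq hqT => (fan_pos hgx hgy hgW q hqT).ne' ?_
  exact ((convex_singleton 0).affine_preimage g).segment_subset (chordSide_left _ _)
    (chordSide_right _ _) hq

theorem coe_eq_of_segment_meets_openSegment {x y a b : ℝ} (hxy : x < y) (hyx : y < x + 1)
    (ha : a ∈ Icc y (x + 1)) (hb : b ∈ Icc y (x + 1)) {q : ℂ}
    (hqab : q ∈ segment ℝ (circleMap1 a) (circleMap1 b))
    (hq : q ∈ openSegment ℝ (circleMap1 x) (circleMap1 y)) :
    ((a : S1) = x ∧ (b : S1) = y) ∨ ((a : S1) = y ∧ (b : S1) = x) := by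
  set f := chordSide (circleMap1 x) (circleMap1 y)
  have hq₁ : ‖q‖ < 1 := by
    have hball := (strictConvex_closedBall ℝ (0 : ℂ) 1).openSegment_subset
      (circleMap1_mem_closedBall x) (circleMap1_mem_closedBall y) (circleMap1_ne hxy hyx) hq
    rwa [interior_closedBall _ one_ne_zero, mem_ball_zero_iff] at hball
  have hfq : f q = 0 := ((convex_singleton 0).affine_preimage f).openSegment_subset
    (chordSide_left _ _) (chordSide_right _ _) hq
  have hzero : ∀ w ∈ Icc y (x + 1), f (circleMap1 w) = 0 → (w : S1) = x ∨ (w : S1) = y := by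
    rintro w ⟨hw₁, hw₂⟩ hw
    rcases hw₁.eq_or_lt with rfl | hw₁
    · exact Or.inr rfl
    rcases hw₂.eq_or_lt with rfl | hw₂
    · exact Or.inl (AddCircle.coe_add_period 1 x)
    exact absurd hw (chordSide_circleMap1_pos hxy hw₁ hw₂).ne'
  rw [segment_eq_image_lineMap] at hqab
  obtain ⟨t, ⟨ht₀, ht₁⟩, rfl⟩ := hqab
  have ht₀' : 0 < t := ht₀.lt_of_ne <| by
    rintro rfl; rw [AffineMap.lineMap_apply_zero, norm_circleMap1] at hq₁; exact hq₁.false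
  have ht₁' : t < 1 := ht₁.lt_of_ne <| by
    rintro rfl; rw [AffineMap.lineMap_apply_one, norm_circleMap1] at hq₁; exact hq₁.false
  rw [AffineMap.apply_lineMap, AffineMap.lineMap_apply_ring] at hfq
  have hfa := chordSide_circleMap1_nonneg hxy hyx ha
  have hfb := chordSide_circleMap1_nonneg hxy hyx hb
  have hab : (a : S1) ≠ b := by
    intro h
    rw [← toC_coe, ← toC_coe, h, AffineMap.lineMap_same_apply, norm_toC] at hq₁
    exact hq₁.false
  rcases hzero a ha (by nlinarith) with h₁ | h₁ <;> rcases hzero b hb (by nlinarith) with h₂ | h₂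
  exacts [absurd (h₁.trans h₂.symm) hab, Or.inl ⟨h₁, h₂⟩, Or.inr ⟨h₁, h₂⟩,
    absurd (h₁.trans h₂.symm) hab]

variable {d : ℕ}

theorem disjoint_fan_leafUnion {E : LamEq d} {x y : ℝ} (hxy : x < y) (hyx : y < x + 1)
    (hsat : ∀ c e, E.IsEdge c e → StrictArc x c y → StrictArc x e y) (hxy' : ¬ E.IsEdge x y)
    {W : Set ℝ} (hW : W ⊆ Ioo x y) (hWc : ∀ u ∈ W, ¬ Covered (E.leafIntervals x y) u) :
    Disjoint (fan (circleMap1 x) (circleMap1 y) (circleMap1 '' W)) (leafUnion E) := by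
  refine disjoint_right.2 fun q hq hqT => ?_
  simp only [leafUnion, mem_iUnion] at hq
  obtain ⟨⟨c, e⟩, hce, hq⟩ := hq
  by_cases hc : StrictArc x c y
  · obtain ⟨s, hs, rfl⟩ := hc.exists_coe_eq_mem_Ioo hxy hyx
    obtain ⟨s', hs', rfl⟩ := (hsat _ _ hce hc).exists_coe_eq_mem_Ioo hxy hyx
    rw [chordSeg, toC_coe, toC_coe] at hq
    have hleaf : ∀ s s' : ℝ, s ∈ Ioo x y → s' ∈ Ioo x y → s < s' → E.IsEdge s s' →
        q ∈ segment ℝ (circleMap1 s) (circleMap1 s') → False := fun s s' hs hs' hss hE hq =>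
      (disjoint_segment_fan_of_nested hs.1 hss hs'.2 hyx (hW.trans Ioo_subset_Icc_self)
        fun u hu hus => hWc u hu ⟨(s, s'), ⟨hs.1, hss, hs'.2, hE⟩, hus⟩).notMem_of_mem_left hq hqT
    rcases lt_trichotomy s s' with h | rfl | h
    · exact hleaf s s' hs hs' h hce hq
    · exact hce.2.1 rfl
    · exact hleaf s' s hs' hs h hce.symm (segment_symm ℝ (circleMap1 s) _ ▸ hq)
  · have he : ¬ StrictArc x e y := fun he => hc (hsat _ _ hce.symm he)
    obtain ⟨a, ha, rfl⟩ := exists_coe_eq_mem_Icc_of_not_strictArc hc hyx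
    obtain ⟨b, hb, rfl⟩ := exists_coe_eq_mem_Icc_of_not_strictArc he hyx
    rw [chordSeg, toC_coe, toC_coe] at hq
    have hside : 0 ≤ chordSide (circleMap1 x) (circleMap1 y) q :=
      ((convex_Ici (0 : ℝ)).affine_preimage _).segment_subset
        (chordSide_circleMap1_nonneg hxy hyx ha) (chordSide_circleMap1_nonneg hxy hyx hb) hq
    have hq' := mem_openSegment_of_mem_fan (chordSide_left _ _) (chordSide_right _ _)
      (by rintro _ ⟨u, hu, rfl⟩; exact chordSide_circleMap1_neg (hW hu).1 (hW hu).2 hyx) hqT hside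
    rcases coe_eq_of_segment_meets_openSegment hxy hyx ha hb hq hq' with ⟨h₁, h₂⟩ | ⟨h₁, h₂⟩
    · exact hxy' (h₁ ▸ h₂ ▸ hce)
    · exact hxy' (h₁ ▸ h₂ ▸ hce.symm)

theorem exists_infinite_gap {E₁ E₂ : LamEq d} (htune : ∀ x y, E₁.r x y → E₂.r x y)
    {p₁ p₂ : S1} (hr : E₂.r p₁ p₂) (hne : p₁ ≠ p₂)
    (hside : ∀ z, E₂.r p₁ z → ¬ StrictArc p₁ z p₂) (hnot : ¬ E₁.IsEdge p₁ p₂) :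
    ∃ z ∈ Metric.ball (0 : ℂ) 1 \ leafUnion E₁,
      segment ℝ (toC p₁) (toC p₂) ⊆
        closure (connectedComponentIn (Metric.ball (0 : ℂ) 1 \ leafUnion E₁) z) ∧
      {w : S1 |
        toC w ∈ closure (connectedComponentIn (Metric.ball (0 : ℂ) 1 \ leafUnion E₁) z)
        }.Infinite := by
  obtain ⟨x, y, rfl, rfl, hxy, hyx⟩ := exists_lifts hne
  set W := {s ∈ Icc x y | ¬ Covered (E₁.leafIntervals x y) s} \ {x, y}
  have hWinf : W.Infinite := (E₁.infinite_not_covered hxy hyx.le fun h =>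
    hnot ⟨h, hne, Or.inl fun z hz => hside z (htune _ _ hz)⟩).sdiff (toFinite _)
  have hW : W ⊆ Ioo x y := fun s ⟨⟨⟨h₁, h₂⟩, _⟩, hs⟩ => by
    simp only [mem_insert_iff, mem_singleton_iff, not_or] at hs
    exact ⟨h₁.lt_of_ne (Ne.symm hs.1), h₂.lt_of_ne hs.2⟩
  set T := fan (circleMap1 x) (circleMap1 y) (circleMap1 '' W)
  set D := Metric.ball (0 : ℂ) 1 \ leafUnion E₁
  have hTD : T ⊆ D := fun q hq => by
    refine ⟨?_, (disjoint_fan_leafUnion hxy hyx (fun c e hce hc =>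
      E₂.strictArc_of_r hr hne hside hc (htune _ _ hce.1)) hnot hW
        fun u hu => hu.1.2).notMem_of_mem_left hq⟩
    have hV : circleMap1 '' W ⊆ closure (Metric.closedBall (0 : ℂ) 1) := by
      rw [Metric.isClosed_closedBall.closure_eq]
      rintro _ ⟨u, -, rfl⟩
      exact circleMap1_mem_closedBall u
    have := fan_subset_interior (strictConvex_closedBall ℝ (0 : ℂ) 1)
      (circleMap1_mem_closedBall x) (circleMap1_mem_closedBall y) (circleMap1_ne hxy hyx) hV hq
    rwa [interior_closedBall _ one_ne_zero] at this
  have hTc := isPreconnected_fan.subset_connectedComponentIn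
    (openSegment_subset_fan (midpoint_mem_openSegment _ _)) hTD
  refine ⟨_, hTD (openSegment_subset_fan (midpoint_mem_openSegment _ _)), ?_, ?_⟩
  · rw [toC_coe, toC_coe]
    exact segment_subset_closure_fan.trans (closure_mono hTc)
  · have hinj : InjOn ((↑) : ℝ → S1) W := fun u hu v hv =>
      (AddCircle.coe_eq_coe_iff_of_mem_Ico (a := x) (p := 1)
        ⟨(hW hu).1.le, by linarith [(hW hu).2]⟩ ⟨(hW hv).1.le, by linarith [(hW hv).2]⟩).1
    refine (hWinf.image hinj).mono ?_
    rintro _ ⟨u, hu, rfl⟩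
    rw [mem_ofPred_eq, toC_coe]
    exact closure_mono hTc (subset_closure_fan (mem_image_of_mem _ hu))

end Lamination

theorem tuned_leaf_in_infinite_gap_general (d : ℕ) (E1 E2 : LamEq d)
    (htune : ∀ x y, E1.r x y → E2.r x y)
    (ℓ : S1 × S1) (hleaf2 : E2.IsEdge ℓ.1 ℓ.2)
    (hnot1 : ¬ E1.IsEdge ℓ.1 ℓ.2) :
    ∃ z ∈ Metric.ball (0 : ℂ) 1 \ leafUnion E1,
      chordSeg ℓ ⊆
        closure (connectedComponentIn (Metric.ball (0 : ℂ) 1 \ leafUnion E1) z) ∧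
      {w : S1 |
        toC w ∈ closure (connectedComponentIn (Metric.ball (0 : ℂ) 1 \ leafUnion E1) z)
        }.Infinite := by
  obtain ⟨hr, hne, hside | hside⟩ := hleaf2
  · exact Lamination.exists_infinite_gap htune hr hne hside hnot1
  · obtain ⟨z, hz, hseg, hinf⟩ := Lamination.exists_infinite_gap htune (E2.symm hr) hne.symm
      (fun z hz => hside z (E2.trans hr hz)) fun h => hnot1 h.symm
    exact ⟨z, hz, by rwa [chordSeg, segment_symm], hinf⟩

/-- Suppose the q-lamination `Λ₂` of `E₂` tunes the q-lamination `Λ₁` of `E₁`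
(every `E₁`-class is contained in an `E₂`-class).  If `ℓ` is a leaf of `Λ₂` which is not a
leaf of `Λ₁` and not a limit of leaves of `Λ₁`, then `ℓ` is contained in the closure of an
infinite gap of `Λ₁`: the closure of some connected component of the open disk minus the
union of the leaves of `Λ₁` contains the segment `ℓ` and meets the circle in infinitely
many points. -/
theorem tuned_leaf_in_infinite_gap (d : ℕ) (hd : 2 ≤ d) (E1 E2 : LamEq d)
    (htune : ∀ x y, E1.r x y → E2.r x y)
    (ℓ : S1 × S1) (hleaf2 : E2.IsEdge ℓ.1 ℓ.2)
    (hnot1 : ¬ E1.IsEdge ℓ.1 ℓ.2)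
    (hnotlim : ℓ ∉ closure {p : S1 × S1 | E1.IsEdge p.1 p.2}) :
    ∃ z ∈ Metric.ball (0 : ℂ) 1 \ leafUnion E1,
      chordSeg ℓ ⊆
        closure (connectedComponentIn (Metric.ball (0 : ℂ) 1 \ leafUnion E1) z) ∧
      {w : S1 |
        toC w ∈ closure (connectedComponentIn (Metric.ball (0 : ℂ) 1 \ leafUnion E1) z)
        }.Infinite :=
  tuned_leaf_in_infinite_gap_general d E1 E2 htune ℓ hleaf2 hnot1
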